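/- arXiv:2003.04912 — 2 statements merged into one kernel-verified Lean document; each statement's English description precedes it below -/
import Mathlib

section
/- For n ≥ 1, the number of pop-stacked permutations of size n with exactly two runs equals 2^n − 2n. -/
/-- Split a list into maximal strictly decreasing contiguous blocks ("falls"). -/
def fallSplit : List ℕ → List (List ℕ)
  | [] => []
  | a :: rest =>
    match fallSplit rest with
    | (b :: bs) :: gs => if b < a then (a :: b :: bs) :: gs else [a] :: (b :: bs) :: gs
    | gs => [a] :: gs

/-- Split a list into maximal strictly increasing contiguous blocks ("runs"). -/
def runSplit : List ℕ → List (List ℕ)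
  | [] => []
  | a :: rest =>
    match runSplit rest with
    | (b :: bs) :: gs => if a < b then (a :: b :: bs) :: gs else [a] :: (b :: bs) :: gs
    | gs => [a] :: gs

/-- The flip transformation `T`: reverse every fall. -/
def flipT (l : List ℕ) : List ℕ := ((fallSplit l).map List.reverse).flatten

/-- `l` is the one-line notation of a permutation of `{1, …, n}`. -/
def IsPermList (n : ℕ) (l : List ℕ) : Prop := l.Perm (List.range' 1 n)

/-- Every pair of adjacent runs overlaps: `min R₁ < max R₂` (pop-stacked condition). -/
def Overlapping (l : List ℕ) : Prop :=
  ∀ R₁ R₂ : List ℕ, [R₁, R₂] <:+: runSplit l → ∃ a ∈ R₁, ∃ b ∈ R₂, a < b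

/-!
A list with exactly two runs is `A ++ B` with `A` and `B` increasing, so a permutation of
`{1, …, n}` with two runs is determined by the set `S` of entries of `A`: the runs are `S` and
its complement, each listed in increasing order. The descent between the runs says that `S` is
not an initial segment of `{1, …, n}`, and the pop-stacked condition says that `S` is not a final
segment. Initial segments, like final ones, are nested and hence determined by their size, so
there are `n + 1` of each, and only `∅` and `{1, …, n}` are both; this leaves `2 ^ n - 2 n` sets.
-/

open Finset

def NoAscentBetween (A B : List ℕ) : Prop :=
  ∀ x ∈ A.getLast?, ∀ y ∈ B.head?, ¬ x < y

def IsRunDecomposition (gs : List (List ℕ)) : Prop :=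
  (∀ g ∈ gs, g ≠ [] ∧ g.IsChain (· < ·)) ∧ gs.IsChain NoAscentBetween

lemma isRunDecomposition_runSplit (l : List ℕ) : IsRunDecomposition (runSplit l) := by
  induction l with
  | nil => simp [IsRunDecomposition, runSplit]
  | cons a l ih =>
    obtain ⟨hblocks, hchain⟩ := ih
    rw [runSplit]
    rcases h : runSplit l with _ | ⟨_ | ⟨b, bs⟩, gs⟩ <;> rw [h] at hblocks hchain
    · simp [IsRunDecomposition]
    · simp at hblocks
    · dsimp only
      split_ifs with hab
      · refine ⟨?_, ?_⟩
        · simp only [List.mem_cons, forall_eq_or_imp] at hblocks ⊢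
          exact ⟨⟨by simp, hblocks.1.2.cons_cons hab⟩, hblocks.2⟩
        · rw [List.isChain_cons] at hchain ⊢
          simpa [NoAscentBetween] using hchain
      · refine ⟨?_, hchain.cons_cons (by simpa [NoAscentBetween] using hab)⟩
        simp only [List.mem_cons, forall_eq_or_imp] at hblocks ⊢
        exact ⟨by simp, hblocks⟩

@[simp]
lemma flatten_runSplit (l : List ℕ) : (runSplit l).flatten = l := by
  induction l with
  | nil => rfl
  | cons a l ih =>
    rw [runSplit]
    rcases h : runSplit l with _ | ⟨_ | ⟨b, bs⟩, gs⟩ <;> rw [h] at ih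
    · simp [← ih]
    · simp [← ih]
    · dsimp only
      split <;> simp [← ih]

lemma runSplit_append {A l : List ℕ} (hA : A ≠ []) (hA' : A.IsChain (· < ·))
    (h : NoAscentBetween A l) : runSplit (A ++ l) = A :: runSplit l := by
  induction A with
  | nil => contradiction
  | cons a A ih =>
    rcases A with _ | ⟨a', A⟩
    · rw [List.singleton_append, runSplit]
      rcases hl : runSplit l with _ | ⟨_ | ⟨b, bs⟩, gs⟩
      · rfl
      · rfl
      · have hl' : l = b :: (bs ++ gs.flatten) := by
          simpa [hl] using (flatten_runSplit l).symm
        have hab : ¬ a < b := h a rfl b (by simp [hl'])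
        simp [hab]
    · have h' : NoAscentBetween (a' :: A) l := by simpa [NoAscentBetween] using h
      rw [List.cons_append, runSplit, ih (by simp) hA'.tail h']
      simp [(List.isChain_cons_cons.mp hA').1]

lemma runSplit_flatten {gs : List (List ℕ)} (h : IsRunDecomposition gs) :
    runSplit gs.flatten = gs := by
  induction gs with
  | nil => rfl
  | cons g gs ih =>
    obtain ⟨hblocks, hchain⟩ := h
    have hg := hblocks g List.mem_cons_self
    have hjoin : NoAscentBetween g gs.flatten := by
      rcases gs with _ | ⟨g', gs⟩
      · simp [NoAscentBetween]
      · have hg' := (hblocks g' (by simp)).1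
        intro x hx y hy
        exact (List.isChain_cons_cons.mp hchain).1 x hx y
          (by simpa [List.head?_append, hg'] using hy)
    rw [List.flatten_cons, runSplit_append hg.1 hg.2 hjoin,
      ih ⟨fun g' hg' => hblocks g' (List.mem_cons_of_mem _ hg'), hchain.tail⟩]

lemma runSplit_eq_iff {l : List ℕ} {gs : List (List ℕ)} :
    runSplit l = gs ↔ l = gs.flatten ∧ IsRunDecomposition gs := by
  constructor
  · rintro rfl
    exact ⟨(flatten_runSplit l).symm, isRunDecomposition_runSplit l⟩
  · rintro ⟨rfl, h⟩
    exact runSplit_flatten h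

lemma isRunDecomposition_pair_iff {A B : List ℕ} :
    IsRunDecomposition [A, B] ↔
      (A ≠ [] ∧ A.SortedLT) ∧ (B ≠ [] ∧ B.SortedLT) ∧ NoAscentBetween A B := by
  simp [IsRunDecomposition, List.sortedLT_iff_isChain, and_assoc]

lemma noAscentBetween_iff {A B : List ℕ} (hA : A.SortedLT) (hB : B.SortedLT) (hA₀ : A ≠ [])
    (hB₀ : B ≠ []) : NoAscentBetween A B ↔ ∃ a ∈ A, ∃ b ∈ B, ¬ a < b := by
  simp only [NoAscentBetween, List.getLast?_eq_some_getLast hA₀, List.head?_eq_some_head hB₀,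
    Option.mem_def, Option.some.injEq, forall_eq']
  constructor
  · exact fun h => ⟨_, List.getLast_mem hA₀, _, List.head_mem hB₀, h⟩
  · rintro ⟨a, ha, b, hb, hab⟩ hlt
    exact hab <| (hA.sortedLE.pairwise.rel_getLast ha).trans_lt <|
      hlt.trans_le (hB.sortedLE.pairwise.rel_head hb)

lemma overlapping_iff_of_runSplit_eq {l A B : List ℕ} (h : runSplit l = [A, B]) :
    Overlapping l ↔ ∃ a ∈ A, ∃ b ∈ B, a < b := by
  refine ⟨fun hl => hl A B (h ▸ List.infix_rfl), fun hAB R₁ R₂ hR => ?_⟩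
  rw [h] at hR
  obtain ⟨rfl, rfl⟩ : R₁ = A ∧ R₂ = B := by
    simpa using hR.sublist.eq_of_length (by simp)
  exact hAB

section Cut

variable {α : Type*} [DecidableEq α] {r r' : α → α → Prop} {U S T : Finset α}

def IsCut (r : α → α → Prop) (U S : Finset α) : Prop := ∀ a ∈ S, ∀ b ∈ U \ S, r a b

instance [DecidableRel r] : DecidablePred (IsCut r U) :=
  fun _ => inferInstanceAs (Decidable (∀ a ∈ _, ∀ b ∈ _, _))

lemma IsCut.subset_or_subset (hr : ∀ a b, r a b → r b a → a = b) (hSU : S ⊆ U) (hTU : T ⊆ U)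
    (hS : IsCut r U S) (hT : IsCut r U T) : S ⊆ T ∨ T ⊆ S := by
  by_contra! h
  obtain ⟨⟨a, haS, haT⟩, ⟨b, hbT, hbS⟩⟩ := And.intro (not_subset.1 h.1) (not_subset.1 h.2)
  have hab := hr a b (hS a haS b (mem_sdiff.2 ⟨hTU hbT, hbS⟩))
    (hT b hbT a (mem_sdiff.2 ⟨hSU haS, haT⟩))
  exact hbS (hab ▸ haS)

lemma IsCut.eq_empty_or_eq (hrr' : ∀ a b, r a b → ¬ r' a b) (hSU : S ⊆ U)
    (hS : IsCut r U S) (hS' : IsCut r' U S) : S = ∅ ∨ S = U := by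
  by_contra! h
  obtain ⟨a, ha⟩ := h.1
  obtain ⟨b, hb⟩ := sdiff_nonempty.2 fun hUS => h.2 (hSU.antisymm hUS)
  exact hrr' a b (hS a ha b hb) (hS' a ha b hb)

lemma card_filter_isCut [DecidableRel r] (hr : ∀ a b, r a b → r b a → a = b)
    (hsize : ∀ k ≤ #U, ∃ S ⊆ U, IsCut r U S ∧ #S = k) :
    #{S ∈ U.powerset | IsCut r U S} = #U + 1 := by
  rw [← card_range (#U + 1)]
  refine card_bij (fun S _ => #S) ?_ ?_ ?_
  · intro S hS
    simp only [mem_filter, mem_powerset] at hS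
    exact mem_range_succ_iff.2 (card_le_card hS.1)
  · intro S hS T hT hST
    simp only [mem_filter, mem_powerset] at hS hT
    rcases hS.2.subset_or_subset hr hS.1 hT.1 hT.2 with h | h
    · exact eq_of_subset_of_card_le h hST.ge
    · exact (eq_of_subset_of_card_le h hST.le).symm
  · intro k hk
    obtain ⟨S, hSU, hS, rfl⟩ := hsize k (mem_range_succ_iff.1 hk)
    exact ⟨S, by simp [hSU, hS], rfl⟩

end Cut

lemma card_filter_isCut_lt (n : ℕ) :
    #{S ∈ (Icc 1 n).powerset | IsCut (· < ·) (Icc 1 n) S} = n + 1 := by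
  have hsize (k : ℕ) (hk : k ≤ #(Icc 1 n)) :
      ∃ S ⊆ Icc 1 n, IsCut (· < ·) (Icc 1 n) S ∧ #S = k := by
    rw [Nat.card_Icc] at hk
    refine ⟨Icc 1 k, Icc_subset_Icc_right (by omega), fun a ha b hb => ?_, by simp⟩
    simp only [mem_Icc, mem_sdiff] at ha hb
    omega
  simpa using card_filter_isCut (fun a b h h' => (lt_asymm h h').elim) hsize

lemma card_filter_isCut_ge (n : ℕ) :
    #{S ∈ (Icc 1 n).powerset | IsCut (· ≥ ·) (Icc 1 n) S} = n + 1 := by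
  have hsize (k : ℕ) (hk : k ≤ #(Icc 1 n)) :
      ∃ S ⊆ Icc 1 n, IsCut (· ≥ ·) (Icc 1 n) S ∧ #S = k := by
    rw [Nat.card_Icc] at hk
    refine ⟨Icc (n + 1 - k) n, Icc_subset_Icc_left (by omega), fun a ha b hb => ?_,
      by rw [Nat.card_Icc]; omega⟩
    simp only [mem_Icc, mem_sdiff] at ha hb
    omega
  simpa using card_filter_isCut (fun a b h h' => le_antisymm h' h) hsize

def interleavedSets (n : ℕ) : Finset (Finset ℕ) :=
  {S ∈ (Icc 1 n).powerset | ¬ IsCut (· < ·) (Icc 1 n) S ∧ ¬ IsCut (· ≥ ·) (Icc 1 n) S}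

lemma card_interleavedSets {n : ℕ} (hn : 1 ≤ n) : #(interleavedSets n) = 2 ^ n - 2 * n := by
  unfold interleavedSets
  set U := Icc 1 n
  have hboth : {S ∈ U.powerset | IsCut (· < ·) U S ∧ IsCut (· ≥ ·) U S} = {∅, U} := by
    ext S
    simp only [mem_filter, mem_powerset, mem_insert, mem_singleton]
    constructor
    · rintro ⟨hSU, hlt, hge⟩
      exact hlt.eq_empty_or_eq (fun a b h h' => not_le.2 h h') hSU hge
    · rintro (rfl | rfl) <;> simp [IsCut]
  have hpair : #({∅, U} : Finset (Finset ℕ)) = 2 :=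
    card_pair (nonempty_iff_ne_empty.1 (nonempty_Icc.2 hn)).symm
  have hbad := card_union_add_card_inter
    {S ∈ U.powerset | IsCut (· < ·) U S} {S ∈ U.powerset | IsCut (· ≥ ·) U S}
  rw [← filter_or, ← filter_and, hboth, hpair, card_filter_isCut_lt, card_filter_isCut_ge] at hbad
  have hsplit := card_filter_add_card_filter_not (s := U.powerset)
    (fun S => IsCut (· < ·) U S ∨ IsCut (· ≥ ·) U S)
  rw [card_powerset, show #U = n by simp [U]] at hsplit
  simp only [not_or] at hsplit
  omega

lemma mem_interleavedSets {n : ℕ} {S : Finset ℕ} :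
    S ∈ interleavedSets n ↔ S ⊆ Icc 1 n ∧ (∃ a ∈ S, ∃ b ∈ Icc 1 n \ S, ¬ a < b) ∧
      ∃ a ∈ S, ∃ b ∈ Icc 1 n \ S, a < b := by
  simp only [interleavedSets, IsCut, mem_filter, mem_powerset, not_forall, exists_prop, not_le]

lemma isPermList_iff {n : ℕ} {l : List ℕ} :
    IsPermList n l ↔ l.Nodup ∧ ∀ x, x ∈ l ↔ x ∈ Icc 1 n := by
  have hrange (x : ℕ) : x ∈ List.range' 1 n ↔ x ∈ Icc 1 n := by
    simp only [List.mem_range'_1, mem_Icc]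
    omega
  refine ⟨fun h => ⟨h.nodup_iff.2 List.nodup_range', fun x => h.mem_iff.trans (hrange x)⟩,
    fun ⟨hl, hmem⟩ => (List.perm_ext_iff_of_nodup hl List.nodup_range').2 fun x => ?_⟩
  rw [hmem, hrange]

def twoRunList (n : ℕ) (S : Finset ℕ) : List ℕ := S.sort ++ (Icc 1 n \ S).sort

lemma isPermList_twoRunList {n : ℕ} {S : Finset ℕ} (hS : S ⊆ Icc 1 n) :
    IsPermList n (twoRunList n S) := by
  refine isPermList_iff.2 ⟨List.nodup_append.2 ⟨sort_nodup _ _, sort_nodup _ _, ?_⟩, fun x => ?_⟩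
  · simp only [mem_sort, mem_sdiff]
    rintro a ha b ⟨-, hb⟩ rfl
    exact hb ha
  · simp only [twoRunList, List.mem_append, mem_sort, mem_sdiff]
    have := @hS x
    tauto

lemma runSplit_twoRunList {n : ℕ} {S : Finset ℕ} (hS : ∃ a ∈ S, ∃ b ∈ Icc 1 n \ S, ¬ a < b) :
    runSplit (twoRunList n S) = [S.sort, (Icc 1 n \ S).sort] := by
  obtain ⟨a, ha, b, hb, hab⟩ := hS
  have hA₀ : S.sort ≠ [] := List.ne_nil_of_mem ((mem_sort _).2 ha)
  have hB₀ : (Icc 1 n \ S).sort ≠ [] := List.ne_nil_of_mem ((mem_sort _).2 hb)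
  refine runSplit_eq_iff.2 ⟨by simp [twoRunList], isRunDecomposition_pair_iff.2
    ⟨⟨hA₀, sortedLT_sort _⟩, ⟨hB₀, sortedLT_sort _⟩, ?_⟩⟩
  exact (noAscentBetween_iff (sortedLT_sort _) (sortedLT_sort _) hA₀ hB₀).2
    ⟨a, (mem_sort _).2 ha, b, (mem_sort _).2 hb, hab⟩

lemma exists_sort_eq_of_isPermList_append {n : ℕ} {A B : List ℕ} (hl : IsPermList n (A ++ B))
    (hA : A.SortedLT) (hB : B.SortedLT) :
    ∃ S ⊆ Icc 1 n, A = S.sort ∧ B = (Icc 1 n \ S).sort := by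
  obtain ⟨hnodup, hmem⟩ := isPermList_iff.1 hl
  obtain ⟨-, -, hdisj⟩ := List.nodup_append.1 hnodup
  have hcompl : Icc 1 n \ A.toFinset = B.toFinset := by
    ext x
    have := hmem x
    have := fun h => hdisj x h x
    simp only [mem_sdiff, List.mem_toFinset, List.mem_append] at *
    tauto
  refine ⟨A.toFinset, fun x hx => (hmem x).1 (by simp_all), ?_, ?_⟩
  · exact ((List.toFinset_sort _ hA.nodup).2 hA.sortedLE.pairwise).symm
  · rw [hcompl]
    exact ((List.toFinset_sort _ hB.nodup).2 hB.sortedLE.pairwise).symm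

lemma twoRunList_injOn (n : ℕ) : Set.InjOn (twoRunList n) (interleavedSets n) := by
  intro S hS T hT hST
  have h := runSplit_twoRunList (mem_interleavedSets.1 hS).2.1
  rw [hST, runSplit_twoRunList (mem_interleavedSets.1 hT).2.1, List.cons.injEq] at h
  simpa using (congrArg List.toFinset h.1).symm

lemma popStacked_two_runs_iff {n : ℕ} {l : List ℕ} :
    IsPermList n l ∧ Overlapping l ∧ (runSplit l).length = 2 ↔
      ∃ S ∈ interleavedSets n, twoRunList n S = l := by
  simp only [mem_interleavedSets]
  constructor
  · rintro ⟨hperm, hover, hlen⟩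
    obtain ⟨A, B, hrun⟩ := List.length_eq_two.1 hlen
    obtain ⟨rfl, hdec⟩ := runSplit_eq_iff.1 hrun
    obtain ⟨⟨hA₀, hA⟩, ⟨hB₀, hB⟩, hdesc⟩ := isRunDecomposition_pair_iff.1 hdec
    rw [List.flatten_cons, List.flatten_singleton] at hperm hover hrun ⊢
    obtain ⟨S, hSU, rfl, rfl⟩ := exists_sort_eq_of_isPermList_append hperm hA hB
    obtain ⟨a, ha, b, hb, hab⟩ := (noAscentBetween_iff hA hB hA₀ hB₀).1 hdesc
    obtain ⟨a', ha', b', hb', hab'⟩ := (overlapping_iff_of_runSplit_eq hrun).1 hover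
    simp only [mem_sort] at ha hb ha' hb'
    exact ⟨S, ⟨hSU, ⟨a, ha, b, hb, hab⟩, ⟨a', ha', b', hb', hab'⟩⟩, rfl⟩
  · rintro ⟨S, ⟨hSU, hdesc, a, ha, b, hb, hab⟩, rfl⟩
    have hrun := runSplit_twoRunList hdesc
    refine ⟨isPermList_twoRunList hSU, ?_, by simp [hrun]⟩
    exact (overlapping_iff_of_runSplit_eq hrun).2 ⟨a, (mem_sort _).2 ha, b, (mem_sort _).2 hb, hab⟩

/-- For n ≥ 1, the number of pop-stacked permutations of size n with exactly two runs
is 2^n - 2n. -/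
theorem count_popStacked_two_runs (n : ℕ) (hn : 1 ≤ n) :
    Nat.card {l : List ℕ // IsPermList n l ∧ Overlapping l ∧ (runSplit l).length = 2} =
      2 ^ n - 2 * n := by
  have hset : {l : List ℕ | IsPermList n l ∧ Overlapping l ∧ (runSplit l).length = 2} =
      (interleavedSets n).image (twoRunList n) := by
    ext l
    simp [popStacked_two_runs_iff]
  rw [← Set.coe_ofPred, hset, Nat.card_coe_set_eq, Set.ncard_coe_finset,
    card_image_of_injOn (twoRunList_injOn n), card_interleavedSets hn]
end

section
/- A permutation π is 1-pop-stack-sortable, i.e., T(π) = id, if and only if π is layered (a direct sum of decreasing permutations −id_{m_1}, …, −id_{m_s}). -/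
/-- The layered permutation with layer sizes ms, starting at value s: the direct sum of
the decreasing permutations of the given sizes. -/
def layeredList : ℕ → List ℕ → List ℕ
  | _, [] => []
  | s, m :: ms => (List.range' s m).reverse ++ layeredList (s + m) ms

/-- A permutation is layered if it is the direct sum of decreasing permutations. -/
def IsLayered (l : List ℕ) : Prop :=
  ∃ ms : List ℕ, (∀ m ∈ ms, 0 < m) ∧ l = layeredList 1 ms

/-! The falls of `π` are nonempty and concatenate to `π`. Hence `T π = id` says exactly that the
reversed falls are consecutive intervals `[s, s + m)`, i.e. that `π = ⊕(m₁, …, mₛ)` with the fall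
lengths as layer sizes. Conversely, each layer of a layered permutation is a decreasing block whose
entries all lie below the next entry, so the falls of `⊕(m₁, …, mₛ)` are exactly its layers and `T`
sorts it. -/

theorem fallSplit_cons_eq_ite {a b : ℕ} {bs l : List ℕ} {gs : List (List ℕ)}
    (hl : fallSplit l = (b :: bs) :: gs) :
    fallSplit (a :: l) = if b < a then (a :: b :: bs) :: gs else [a] :: (b :: bs) :: gs := by
  rw [fallSplit, hl]

theorem fallSplit_cons_eq_or (a : ℕ) (l : List ℕ) :
    fallSplit (a :: l) = [a] :: fallSplit l ∨
      ∃ g gs, fallSplit l = g :: gs ∧ fallSplit (a :: l) = (a :: g) :: gs := by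
  rw [fallSplit]
  split
  · next b bs gs hl =>
    rw [hl]
    split
    · exact Or.inr ⟨_, _, rfl, rfl⟩
    · exact Or.inl rfl
  · exact Or.inl rfl

theorem exists_fallSplit_cons_eq (a : ℕ) (l : List ℕ) :
    ∃ bs gs, fallSplit (a :: l) = (a :: bs) :: gs := by
  rcases fallSplit_cons_eq_or a l with h | ⟨g, gs, -, h⟩
  · exact ⟨[], _, h⟩
  · exact ⟨g, gs, h⟩

theorem fallSplit_cons_of_forall_le {a : ℕ} {l : List ℕ} (hle : ∀ b ∈ l.head?, a ≤ b) :
    fallSplit (a :: l) = [a] :: fallSplit l := by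
  cases l with
  | nil => rfl
  | cons b l =>
    obtain ⟨bs, gs, hl⟩ := exists_fallSplit_cons_eq b l
    rw [fallSplit_cons_eq_ite hl, if_neg (by simpa using hle), hl]

theorem flatten_fallSplit (l : List ℕ) : (fallSplit l).flatten = l := by
  induction l with
  | nil => rfl
  | cons a l ih =>
    rcases fallSplit_cons_eq_or a l with h | ⟨g, gs, hl, h⟩
    · rw [h, List.flatten_cons, ih]; rfl
    · rw [h, List.flatten_cons, ← ih, hl, List.flatten_cons]; rfl

theorem ne_nil_of_mem_fallSplit {l g : List ℕ} (hg : g ∈ fallSplit l) : g ≠ [] := by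
  induction l with
  | nil => simp [fallSplit] at hg
  | cons a l ih =>
    rcases fallSplit_cons_eq_or a l with h | ⟨g', gs, hl, h⟩
    · rw [h, List.mem_cons] at hg
      rcases hg with rfl | hg
      · simp
      · exact ih hg
    · rw [h, List.mem_cons] at hg
      rcases hg with rfl | hg
      · simp
      · exact ih (by simp [hl, hg])

theorem fallSplit_append_of_isChain {l rest : List ℕ} (hl : l ≠ [])
    (hdec : l.IsChain (· > ·)) (hle : ∀ a ∈ l, ∀ b ∈ rest.head?, a ≤ b) :
    fallSplit (l ++ rest) = l :: fallSplit rest := by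
  induction hdec with
  | nil => exact absurd rfl hl
  | singleton a => exact fallSplit_cons_of_forall_le (hle a (by simp))
  | @cons_cons a b l hab _ ih =>
    rw [List.cons_append, fallSplit_cons_eq_ite (ih (by simp)
      (fun x hx => hle x (by simp [hx]))), if_pos hab]

theorem isChain_gt_reverse_range' (s n : ℕ) : (List.range' s n).reverse.IsChain (· > ·) := by
  rw [List.isChain_reverse]
  exact (List.isChain_range' s n 1).imp (by omega)

theorem le_of_mem_layeredList {s x : ℕ} {ms : List ℕ} (hx : x ∈ layeredList s ms) : s ≤ x := by
  induction ms generalizing s with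
  | nil => simp [layeredList] at hx
  | cons m ms ih =>
    rw [layeredList, List.mem_append, List.mem_reverse, List.mem_range'_1] at hx
    rcases hx with hx | hx
    · exact hx.1
    · exact (Nat.le_add_right s m).trans (ih hx)

theorem length_layeredList (s : ℕ) (ms : List ℕ) : (layeredList s ms).length = ms.sum := by
  induction ms generalizing s with
  | nil => rfl
  | cons m ms ih => simp [layeredList, ih]

theorem flipT_layeredList {s : ℕ} {ms : List ℕ} (hms : ∀ m ∈ ms, 0 < m) :
    flipT (layeredList s ms) = List.range' s ms.sum := by
  induction ms generalizing s with
  | nil => rfl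
  | cons m ms ih =>
    have hm : (List.range' s m).reverse ≠ [] := by simpa using (hms m (by simp)).ne'
    have hsplit : fallSplit ((List.range' s m).reverse ++ layeredList (s + m) ms) =
        (List.range' s m).reverse :: fallSplit (layeredList (s + m) ms) :=
      fallSplit_append_of_isChain hm (isChain_gt_reverse_range' s m) fun a ha b hb => by
        rw [List.mem_reverse, List.mem_range'_1] at ha
        have := le_of_mem_layeredList (List.mem_of_mem_head? hb)
        omega
    rw [flipT, layeredList, hsplit, List.map_cons, List.flatten_cons, List.reverse_reverse, ← flipT,
      ih (fun m' hm' => hms m' (by simp [hm'])), List.range'_append_1, List.sum_cons]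

theorem flatten_eq_layeredList_of_flatten_map_reverse_eq_range' {gs : List (List ℕ)} {s n : ℕ}
    (h : (gs.map List.reverse).flatten = List.range' s n) :
    gs.flatten = layeredList s (gs.map List.length) := by
  induction gs generalizing s n with
  | nil => rfl
  | cons g gs ih =>
    rw [List.map_cons, List.flatten_cons, eq_comm, List.range'_eq_append_iff] at h
    obtain ⟨k, -, hg, hgs⟩ := h
    obtain rfl : g = (List.range' s k).reverse := by rw [← hg, List.reverse_reverse]
    rw [Nat.mul_one] at hgs
    simp only [List.flatten_cons, List.map_cons, layeredList, List.length_reverse,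
      List.length_range', ih hgs]

/-- A permutation is 1-pop-stack-sortable (T(π) = id) iff it is layered. -/
theorem one_pop_stack_sortable_iff_layered (n : ℕ) (π : List ℕ) (hπ : IsPermList n π) :
    flipT π = List.range' 1 n ↔ IsLayered π := by
  constructor
  · intro h
    refine ⟨(fallSplit π).map List.length, ?_, ?_⟩
    · simpa [List.length_pos_iff] using fun g hg => ne_nil_of_mem_fallSplit hg
    · rw [← flatten_eq_layeredList_of_flatten_map_reverse_eq_range' h, flatten_fallSplit]
  · rintro ⟨ms, hms, rfl⟩
    rw [flipT_layeredList hms, ← length_layeredList, hπ.length_eq, List.length_range']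
end
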